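/- The regular path homology of the complete undirected graph K_n (viewed as the directed graph ρ(K_n) with both orientations of each edge) is concentrated in degree n−1, where it is free of rank D(n) = Σ_{j=0}^n (−1)^j n!/j!, the number of derangements of n elements. -/

import Mathlib

open scoped Classical

/-! ### Regular path homology -/

/-- The free module on all elementary `k`-paths (tuples of `k+1` vertices). -/
abbrev PathChain (V : Type) (k : ℕ) : Type := (Fin (k + 1) → V) →₀ ℤ

/-- The simplicial boundary: alternating sum of all vertex deletions. -/
noncomputable def pathD (V : Type) (k : ℕ) : PathChain V (k + 1) →ₗ[ℤ] PathChain V k :=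
  Finsupp.lift (PathChain V k) ℤ (Fin (k + 2) → V) fun x =>
    ∑ i : Fin (k + 2), ((-1 : ℤ) ^ (i : ℕ)) • Finsupp.single (x ∘ i.succAbove) 1

/-- Strongly regular allowed elementary paths: all vertices distinct, consecutive
vertices joined by a directed edge. -/
def sraSet {V : Type} (A : V → V → Prop) (k : ℕ) : Set (Fin (k + 1) → V) :=
  {x | Function.Injective x ∧ ∀ i : Fin k, A (x i.castSucc) (x i.succ)}

/-- The span of the strongly regular allowed elementary `k`-paths. -/
noncomputable def sraMod {V : Type} (A : V → V → Prop) (k : ℕ) :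
    Submodule ℤ (PathChain V k) :=
  Submodule.span ℤ ((fun x => Finsupp.single x (1 : ℤ)) '' sraSet A k)

/-- `Ω^ι_k`: the `∂`-invariant strongly regular allowed paths. -/
noncomputable def omegaI {V : Type} (A : V → V → Prop) (k : ℕ) :
    Submodule ℤ (PathChain V k) :=
  match k with
  | 0 => sraMod A 0
  | k + 1 => sraMod A (k + 1) ⊓ Submodule.comap (pathD V k) (sraMod A k)

/-- Cycles of the regular path chain complex. -/
noncomputable def rpZ {V : Type} (A : V → V → Prop) (k : ℕ) :
    Submodule ℤ (PathChain V k) :=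
  match k with
  | 0 => omegaI A 0
  | k + 1 => omegaI A (k + 1) ⊓ LinearMap.ker (pathD V k)

/-- Boundaries of the regular path chain complex. -/
noncomputable def rpB {V : Type} (A : V → V → Prop) (k : ℕ) :
    Submodule ℤ (PathChain V k) :=
  Submodule.map (pathD V k) (omegaI A (k + 1))

/-- Regular path homology of a directed graph. -/
noncomputable abbrev RPH {V : Type} (A : V → V → Prop) (k : ℕ) :=
  rpZ A k ⧸ Submodule.comap (rpZ A k).subtype (rpB A k)

/-! ### Homology of the complex of injective words on a digraph -/

/-- Simplices of the complex of injective words on the digraph `A`: tuples of pairwise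
distinct vertices, each later one reachable from each earlier one by a directed path. -/
def injGen {V : Type} (A : V → V → Prop) (k : ℕ) : Set (Fin (k + 1) → V) :=
  {x | Function.Injective x ∧
    ∀ i j : Fin (k + 1), i < j → Relation.ReflTransGen A (x i) (x j)}

/-- Chains of the complex of injective words. -/
abbrev IC {V : Type} (A : V → V → Prop) (k : ℕ) : Type := injGen A k →₀ ℤ

/-- Boundary: alternating sum of vertex deletions. -/
noncomputable def icD {V : Type} (A : V → V → Prop) (k : ℕ) :
    IC A (k + 1) →ₗ[ℤ] IC A k :=
  Finsupp.lift (IC A k) ℤ (injGen A (k + 1)) fun x =>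
    ∑ i : Fin (k + 2), ((-1 : ℤ) ^ (i : ℕ)) •
      (if h : ((x : Fin (k + 2) → V) ∘ i.succAbove) ∈ injGen A k then
        Finsupp.single ⟨_, h⟩ (1 : ℤ) else 0)

/-- Cycles of the complex of injective words. -/
noncomputable def icZ {V : Type} (A : V → V → Prop) (k : ℕ) : Submodule ℤ (IC A k) :=
  match k with
  | 0 => ⊤
  | k + 1 => LinearMap.ker (icD A k)

/-- Homology of the complex of injective words on the digraph `A`. -/
noncomputable abbrev InjH {V : Type} (A : V → V → Prop) (k : ℕ) :=
  icZ A k ⧸ Submodule.comap (icZ A k).subtype (LinearMap.range (icD A k))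

/-- The augmentation sending each vertex to `1`. -/
noncomputable def pathAug (V : Type) : PathChain V 0 →ₗ[ℤ] ℤ :=
  Finsupp.lift ℤ ℤ (Fin 1 → V) fun _ => (1 : ℤ)

/-- Cycles of the reduced (augmented) regular path chain complex. -/
noncomputable def redRpZ {V : Type} (A : V → V → Prop) (k : ℕ) :
    Submodule ℤ (PathChain V k) :=
  match k with
  | 0 => omegaI A 0 ⊓ LinearMap.ker (pathAug V)
  | k + 1 => rpZ A (k + 1)

/-- Reduced regular path homology of a directed graph. -/
noncomputable abbrev redRPH {V : Type} (A : V → V → Prop) (k : ℕ) :=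
  redRpZ A k ⧸ Submodule.comap (redRpZ A k).subtype (rpB A k)

/-- The number of derangeNum `D(n) = Σ_{j=0}^n (-1)^j n!/j!` (as an integer). -/
noncomputable def derangeNum (n : ℕ) : ℤ :=
  ∑ j ∈ Finset.range (n + 1), (-1 : ℤ) ^ j * ((n.factorial / j.factorial : ℕ) : ℤ)

/-! For the complete digraph every injective word is an allowed path and every face of an
injective word is injective, so the regular path complex is the complex of injective words, with
`n!/(n-k-1)!` generators in degree `k` and none above degree `n - 1`. Prepending a letter `a` is
a chain homotopy between the identity and a map onto words containing `a`; applying it for every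
letter in turn shows that a reduced cycle of degree `k < n - 1` is a boundary, because no
injective word with `k + 1 < n` letters uses all of them. The homology is therefore the free
group of top-degree cycles, whose rank is the Euler characteristic `Σ (-1)^j n!/j! = D(n)`. -/

open Finsupp Function

lemma Finsupp.map_supported_le {α β R : Type*} [Semiring R] {s : Set α} {t : Set β}
    (f : (α →₀ R) →ₗ[R] (β →₀ R))
    (h : ∀ x ∈ s, f (single x 1) ∈ supported R R t) :
    (supported R R s).map f ≤ supported R R t := by
  rw [supported_eq_span_single, Submodule.map_span_le]
  rintro _ ⟨x, hx, rfl⟩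
  exact h x hx

lemma Fin.range_cons_apply_comp_succAbove {α : Type*} {n : ℕ} (x : Fin (n + 1) → α)
    (p : Fin (n + 1)) :
    Set.range (Fin.cons (x p) (x ∘ p.succAbove) : Fin (n + 1) → α) = Set.range x := by
  rw [Fin.range_cons, Set.range_comp, Fin.range_succAbove, Set.insert_image_compl_eq_range]

lemma Function.Injective.apply_notMem_range_comp_succAbove {α : Type*} {n : ℕ}
    {x : Fin (n + 1) → α} (hx : Injective x) (p : Fin (n + 1)) :
    x p ∉ Set.range (x ∘ p.succAbove) :=
  fun ⟨l, hl⟩ => Fin.succAbove_ne p l (hx hl)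

lemma Submodule.finrank_map_add_finrank_inf_ker {R M N : Type*} [CommRing R] [IsDomain R]
    [IsNoetherianRing R] [AddCommGroup M] [AddCommGroup N] [Module R M] [Module R N]
    [Module.Finite R M] (f : M →ₗ[R] N) (p : Submodule R M) :
    Module.finrank R (p.map f) + Module.finrank R ↥(p ⊓ LinearMap.ker f) =
      Module.finrank R p := by
  rw [← LinearMap.range_domRestrict, ← Submodule.map_comap_subtype,
    Submodule.finrank_map_subtype_eq, ← LinearMap.ker_domRestrict,
    ← (f.domRestrict p).quotKerEquivRange.finrank_eq, Submodule.finrank_quotient_add_finrank]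

lemma eq_sum_neg_one_pow_of_add_eq {a z : ℕ → ℤ} {m : ℕ} (h0 : z 0 + a 0 = a 1)
    (hs : ∀ k < m, z k + z (k + 1) = a (k + 2)) :
    ∀ k ≤ m, z k = ∑ i ∈ Finset.range (k + 2), (-1) ^ (k + 1 + i) * a i := by
  intro k hk
  induction k with
  | zero => simp [Finset.sum_range_succ]; linarith
  | succ k ih =>
    have hsign (i : ℕ) : (-1 : ℤ) ^ (k + 1 + 1 + i) = -(-1) ^ (k + 1 + i) := by ring
    have htop : (-1 : ℤ) ^ (k + 1 + 1 + (k + 1 + 1)) = 1 := by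
      rw [← two_mul, pow_mul]; simp
    rw [Finset.sum_range_succ _ (k + 2), htop, one_mul]
    simp only [hsign, neg_mul, Finset.sum_neg_distrib, ← ih (by omega)]
    linarith [hs k (by omega)]

lemma derangeNum_eq_sum_descFactorial (n : ℕ) :
    derangeNum n = ∑ i ∈ Finset.range (n + 1), (-1) ^ (n + i) * (n.descFactorial i : ℤ) := by
  rw [derangeNum, ← Finset.sum_range_reflect]
  refine Finset.sum_congr rfl fun i hi => ?_
  have hi : i ≤ n := Nat.lt_succ_iff.mp (Finset.mem_range.mp hi)
  rw [Nat.descFactorial_eq_div hi, Nat.add_sub_cancel, show n + i = (n - i) + 2 * i by omega,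
    pow_add, pow_mul]
  simp

namespace PathChain

variable {V : Type}

lemma pathD_single {k : ℕ} (x : Fin (k + 2) → V) :
    pathD V k (single x 1) =
      ∑ i : Fin (k + 2), (-1 : ℤ) ^ (i : ℕ) • single (x ∘ i.succAbove) 1 := by
  simp [pathD]

lemma pathD_pathD_single {k : ℕ} (x : Fin (k + 3) → V) :
    pathD V k (pathD V (k + 1) (single x 1)) = 0 := by
  simp only [pathD_single, map_sum, map_zsmul, Finset.smul_sum, smul_smul, ← pow_add]
  rw [← Finset.sum_product', Finset.univ_product_univ]
  -- deleting positions `i`, then `j`, equals deleting `i.succAbove j`, then `j.predAbove i`,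
  -- and the two terms carry opposite signs
  refine Finset.sum_involution (fun p _ => (p.1.succAbove p.2, p.2.predAbove p.1))
    (fun p _ => ?_) (fun p _ _ h => ?_) (fun _ _ => Finset.mem_univ _) (fun p _ => ?_)
  · have hword : (x ∘ (p.1.succAbove p.2).succAbove) ∘ (p.2.predAbove p.1).succAbove =
        (x ∘ p.1.succAbove) ∘ p.2.succAbove :=
      funext fun l => congrArg x (Fin.succAbove_succAbove_succAbove_predAbove p.1 p.2 l)
    rw [add_comm (p.1 : ℕ), hword, add_comm (p.2 : ℕ), Fin.neg_one_pow_succAbove_add_predAbove,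
      neg_smul, add_neg_cancel]
  · exact Fin.succAbove_ne _ _ (congrArg Prod.fst h)
  · simp [Fin.succAbove_succAbove_predAbove, Fin.predAbove_predAbove_succAbove]

lemma pathD_pathD {k : ℕ} (c : PathChain V (k + 2)) : pathD V k (pathD V (k + 1) c) = 0 := by
  induction c using Finsupp.induction_linear with
  | zero => simp
  | add f g hf hg => simp [hf, hg]
  | single x b => rw [← smul_single_one, map_zsmul, map_zsmul, pathD_pathD_single, smul_zero]

lemma pathAug_single (x : Fin 1 → V) (c : ℤ) : pathAug V (single x c) = c := by
  simp [pathAug]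

lemma pathAug_pathD (c : PathChain V 1) : pathAug V (pathD V 0 c) = 0 := by
  induction c using Finsupp.induction_linear with
  | zero => simp
  | add f g hf hg => simp [hf, hg]
  | single x b =>
    rw [← smul_single_one, map_zsmul, map_zsmul, pathD_single]
    simp [pathAug_single]

def injChains (T : Finset V) (k : ℕ) : Submodule ℤ (PathChain V k) :=
  supported ℤ ℤ {x | Injective x ∧ ↑T ⊆ Set.range x}

lemma single_mem_injChains {T : Finset V} {k : ℕ} {x : Fin (k + 1) → V} (hx : Injective x)
    (hT : ↑T ⊆ Set.range x) : single x 1 ∈ injChains T k :=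
  single_mem_supported ℤ 1 ⟨hx, hT⟩

lemma injChains_le_injChains_empty (T : Finset V) (k : ℕ) :
    injChains T k ≤ injChains ∅ k :=
  supported_mono fun _ hx => ⟨hx.1, by simp⟩

lemma injChains_empty_zero : injChains (∅ : Finset V) 0 = ⊤ := by
  rw [eq_top_iff, ← supported_univ]
  exact supported_mono fun x _ => ⟨fun i j _ => Subsingleton.elim (α := Fin 1) i j, by simp⟩

lemma injChains_empty_eq_bot [Fintype V] {k : ℕ} (h : Fintype.card V ≤ k) :
    injChains (∅ : Finset V) k = ⊥ := by
  rw [eq_bot_iff, injChains, ← supported_empty]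
  refine supported_mono ?_
  rintro x ⟨hx, -⟩
  have := Fintype.card_le_of_injective x hx
  simp only [Fintype.card_fin] at this
  omega

lemma injChains_univ_eq_bot [Fintype V] {k : ℕ} (h : k + 1 < Fintype.card V) :
    injChains (Finset.univ : Finset V) k = ⊥ := by
  rw [eq_bot_iff, injChains, ← supported_empty]
  refine supported_mono ?_
  rintro x ⟨-, hx⟩
  have := Fintype.card_le_of_surjective x (Set.range_eq_univ.mp (by simpa using hx))
  simp only [Fintype.card_fin] at this
  omega

lemma map_pathD_injChains_le (k : ℕ) :
    (injChains (∅ : Finset V) (k + 1)).map (pathD V k) ≤ injChains ∅ k := by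
  refine map_supported_le _ fun x hx => ?_
  rw [pathD_single]
  exact Submodule.sum_mem _ fun i _ => Submodule.smul_mem _ _ <|
    single_mem_injChains (hx.1.comp Fin.succAbove_right_injective) (by simp)

lemma finrank_injChains [Fintype V] (k : ℕ) :
    Module.finrank ℤ (injChains (∅ : Finset V) k) = (Fintype.card V).descFactorial (k + 1) := by
  rw [injChains, (supportedEquivFinsupp _).finrank_eq, Module.finrank_finsupp_self]
  calc _ = Fintype.card (Fin (k + 1) ↪ V) := Fintype.card_congr <|
        (Equiv.subtypeEquivRight (by simp)).trans (Equiv.subtypeInjectiveEquivEmbedding _ _)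
    _ = _ := by simp [Fintype.card_embedding_eq]

noncomputable def cone (a : V) (k : ℕ) : PathChain V k →ₗ[ℤ] PathChain V (k + 1) :=
  Finsupp.lift (PathChain V (k + 1)) ℤ (Fin (k + 1) → V) fun x =>
    if a ∈ Set.range x then 0 else single (Fin.cons a x) 1

lemma cone_single (a : V) {k : ℕ} (x : Fin (k + 1) → V) :
    cone a k (single x 1) = if a ∈ Set.range x then 0 else single (Fin.cons a x) 1 := by
  simp [cone]

lemma map_cone_injChains_le (a : V) (k : ℕ) :
    (injChains (∅ : Finset V) k).map (cone a k) ≤ injChains ∅ (k + 1) := by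
  refine map_supported_le _ fun x hx => ?_
  rw [cone_single]
  split_ifs with ha
  · exact zero_mem _
  · exact single_mem_injChains (Fin.cons_injective_of_injective ha hx.1) (by simp)

lemma pathD_cone_zero (a : V) (c : PathChain V 0) :
    pathD V 0 (cone a 0 c) = c - pathAug V c • single (fun _ => a) 1 := by
  induction c using Finsupp.induction_linear with
  | zero => simp
  | add f g hf hg => simp only [map_add, hf, hg, add_smul]; abel
  | single x b =>
    rw [← smul_single_one, map_zsmul, map_zsmul, map_zsmul, pathAug_single, cone_single]
    by_cases ha : a ∈ Set.range x
    · obtain ⟨i, hi⟩ := ha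
      have : x = fun _ => a := funext fun j => by rw [Subsingleton.elim (α := Fin 1) j i, hi]
      simp [this]
    · rw [if_neg ha, pathD_single, Fin.sum_univ_two]
      have hlast : (Fin.cons a x : Fin 2 → V) ∘ Fin.succAbove 1 = fun _ => a :=
        funext fun j => by fin_cases j; rfl
      simp [hlast, sub_eq_add_neg]

lemma pathD_cone_add_cone_pathD_of_notMem (a : V) {k : ℕ} (x : Fin (k + 2) → V)
    (ha : a ∉ Set.range x) :
    pathD V (k + 1) (cone a (k + 1) (single x 1)) + cone a k (pathD V k (single x 1)) =
      single x 1 := by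
  have hfaces (i : Fin (k + 2)) : a ∉ Set.range (x ∘ i.succAbove) :=
    fun ⟨l, hl⟩ => ha ⟨i.succAbove l, hl⟩
  have hcons (i : Fin (k + 2)) : (Fin.cons a x : Fin (k + 3) → V) ∘ i.succ.succAbove =
      Fin.cons a (x ∘ i.succAbove) := by
    funext l
    cases l using Fin.cases <;> simp [Fin.succ_succAbove_succ]
  have hzero : (Fin.cons a x : Fin (k + 3) → V) ∘ Fin.succAbove 0 = x := funext fun l => by simp
  rw [cone_single, if_neg ha, pathD_single, Fin.sum_univ_succ, pathD_single, map_sum]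
  simp only [map_zsmul, cone_single, hfaces, if_false, hcons, Fin.val_succ, pow_succ,
    Fin.val_zero, pow_zero, one_smul, mul_neg_one, neg_smul, Finset.sum_neg_distrib]
  rw [hzero, neg_add_cancel_right]

lemma pathD_cone_apply_add_cone_pathD {k : ℕ} {x : Fin (k + 2) → V} (hx : Injective x)
    (p : Fin (k + 2)) :
    pathD V (k + 1) (cone (x p) (k + 1) (single x 1)) + cone (x p) k (pathD V k (single x 1)) =
      (-1 : ℤ) ^ (p : ℕ) • single (Fin.cons (x p) (x ∘ p.succAbove)) 1 := by
  rw [cone_single, if_pos ⟨p, rfl⟩, map_zero, zero_add, pathD_single, map_sum,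
    Finset.sum_eq_single p, map_zsmul, cone_single, if_neg (hx.apply_notMem_range_comp_succAbove p)]
  · intro i _ hip
    obtain ⟨l, hl⟩ : p ∈ Set.range i.succAbove := by rw [Fin.range_succAbove]; exact hip.symm
    rw [map_zsmul, cone_single, if_pos ⟨l, by simp [hl]⟩, smul_zero]
  · simp

lemma map_homotopy_injChains_le (a : V) (T : Finset V) (k : ℕ) :
    (injChains T (k + 1)).map
        (LinearMap.id - pathD V (k + 1) ∘ₗ cone a (k + 1) - cone a k ∘ₗ pathD V k) ≤
      injChains (insert a T) (k + 1) := by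
  refine map_supported_le _ fun x ⟨hx, hT⟩ => ?_
  rw [LinearMap.sub_apply, LinearMap.sub_apply, LinearMap.id_apply, LinearMap.comp_apply,
    LinearMap.comp_apply, sub_sub]
  by_cases ha : a ∈ Set.range x
  · obtain ⟨p, rfl⟩ := ha
    have hcover : ↑(insert (x p) T) ⊆ Set.range x := by
      rw [Finset.coe_insert, Set.insert_subset_iff]
      exact ⟨⟨p, rfl⟩, hT⟩
    rw [pathD_cone_apply_add_cone_pathD hx]
    refine sub_mem (single_mem_injChains hx hcover) (Submodule.smul_mem _ _ ?_)
    refine single_mem_injChains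
      (Fin.cons_injective_of_injective (hx.apply_notMem_range_comp_succAbove p)
        (hx.comp Fin.succAbove_right_injective)) ?_
    rwa [Fin.range_cons_apply_comp_succAbove]
  · rw [pathD_cone_add_cone_pathD_of_notMem a x ha, sub_self]
    exact zero_mem _

lemma injChains_inf_ker_le_sup_insert (a : V) (T : Finset V) (k : ℕ) :
    injChains T (k + 1) ⊓ LinearMap.ker (pathD V k) ≤
      (injChains ∅ (k + 2)).map (pathD V (k + 1)) ⊔
        injChains (insert a T) (k + 1) ⊓ LinearMap.ker (pathD V k) := by
  rintro e ⟨he, hz⟩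
  rw [SetLike.mem_coe, LinearMap.mem_ker] at hz
  have hcone : cone a (k + 1) e ∈ injChains ∅ (k + 2) :=
    map_cone_injChains_le a (k + 1) ⟨e, injChains_le_injChains_empty T _ he, rfl⟩
  have hrest : e - pathD V (k + 1) (cone a (k + 1) e) ∈ injChains (insert a T) (k + 1) := by
    simpa [hz] using map_homotopy_injChains_le a T k ⟨e, he, rfl⟩
  rw [← add_sub_cancel (pathD V (k + 1) (cone a (k + 1) e)) e]
  exact Submodule.add_mem_sup (Submodule.mem_map_of_mem hcone)
    (Submodule.mem_inf.mpr ⟨hrest, by simp [hz, pathD_pathD]⟩)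

lemma injChains_inf_ker_le_sup (T : Finset V) (k : ℕ) :
    injChains ∅ (k + 1) ⊓ LinearMap.ker (pathD V k) ≤
      (injChains ∅ (k + 2)).map (pathD V (k + 1)) ⊔
        injChains T (k + 1) ⊓ LinearMap.ker (pathD V k) := by
  induction T using Finset.induction_on with
  | empty => exact le_sup_right
  | insert a T _ ih => exact ih.trans (sup_le le_sup_left (injChains_inf_ker_le_sup_insert a T k))

lemma injChains_inf_ker_le_map_pathD [Fintype V] {k : ℕ} (h : k + 2 < Fintype.card V) :
    injChains (∅ : Finset V) (k + 1) ⊓ LinearMap.ker (pathD V k) ≤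
      (injChains ∅ (k + 2)).map (pathD V (k + 1)) := by
  simpa [injChains_univ_eq_bot h] using injChains_inf_ker_le_sup (Finset.univ : Finset V) k

lemma ker_pathAug_le_map_pathD (a : V) :
    LinearMap.ker (pathAug V) ≤ (injChains ∅ 1).map (pathD V 0) := by
  intro c hc
  refine ⟨cone a 0 c,
    map_cone_injChains_le a 0 ⟨c, by simp [injChains_empty_zero], rfl⟩, ?_⟩
  rw [pathD_cone_zero, LinearMap.mem_ker.mp hc, zero_smul, sub_zero]

lemma sraMod_complete (k : ℕ) : sraMod (fun x y : V => x ≠ y) k = injChains ∅ k := by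
  have hsra : sraSet (fun x y : V => x ≠ y) k =
      {x | Injective x ∧ ↑(∅ : Finset V) ⊆ Set.range x} := by
    ext x
    exact ⟨fun hx => ⟨hx.1, by simp⟩,
      fun hx => ⟨hx.1, fun i => hx.1.ne (Fin.castSucc_lt_succ (i := i)).ne⟩⟩
  rw [sraMod, hsra, injChains, supported_eq_span_single]

lemma omegaI_complete (k : ℕ) : omegaI (fun x y : V => x ≠ y) k = injChains ∅ k := by
  cases k with
  | zero => exact sraMod_complete 0
  | succ k =>
    rw [omegaI, sraMod_complete, sraMod_complete, inf_eq_left, ← Submodule.map_le_iff_le_comap]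
    exact map_pathD_injChains_le k

lemma rpB_complete (k : ℕ) :
    rpB (fun x y : V => x ≠ y) k = (injChains ∅ (k + 1)).map (pathD V k) := by
  rw [rpB, omegaI_complete]

lemma redRpZ_complete_zero :
    redRpZ (fun x y : V => x ≠ y) 0 = injChains ∅ 0 ⊓ LinearMap.ker (pathAug V) := by
  rw [redRpZ, omegaI_complete]

lemma redRpZ_complete_succ (k : ℕ) :
    redRpZ (fun x y : V => x ≠ y) (k + 1) =
      injChains ∅ (k + 1) ⊓ LinearMap.ker (pathD V k) := by
  rw [redRpZ, rpZ, omegaI_complete]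

lemma rpB_complete_eq_redRpZ_complete [Fintype V] {k : ℕ} (h : k + 1 < Fintype.card V) :
    rpB (fun x y : V => x ≠ y) k = redRpZ (fun x y : V => x ≠ y) k := by
  cases k with
  | zero =>
    obtain ⟨a⟩ : Nonempty V := Fintype.card_pos_iff.mp (by omega)
    rw [rpB_complete, redRpZ_complete_zero, injChains_empty_zero, top_inf_eq]
    refine le_antisymm ?_ (ker_pathAug_le_map_pathD a)
    rintro _ ⟨d, -, rfl⟩
    exact pathAug_pathD d
  | succ k =>
    rw [rpB_complete, redRpZ_complete_succ]
    refine le_antisymm (le_inf (map_pathD_injChains_le _) ?_) (injChains_inf_ker_le_map_pathD h)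
    rintro _ ⟨d, -, rfl⟩
    exact pathD_pathD d

lemma redRpZ_complete_eq_bot [Fintype V] {k : ℕ} (h : Fintype.card V ≤ k) :
    redRpZ (fun x y : V => x ≠ y) k = ⊥ := by
  cases k with
  | zero => rw [redRpZ_complete_zero, injChains_empty_eq_bot h, bot_inf_eq]
  | succ k => rw [redRpZ_complete_succ, injChains_empty_eq_bot h, bot_inf_eq]

lemma rpB_complete_eq_bot [Fintype V] {k : ℕ} (h : Fintype.card V ≤ k + 1) :
    rpB (fun x y : V => x ≠ y) k = ⊥ := by
  rw [rpB_complete, injChains_empty_eq_bot h, Submodule.map_bot]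

lemma finrank_redRpZ_complete_zero_add_one [Fintype V] [Nonempty V] :
    Module.finrank ℤ (redRpZ (fun x y : V => x ≠ y) 0) + 1 = Fintype.card V := by
  obtain ⟨a⟩ := ‹Nonempty V›
  have hsurj : (injChains (∅ : Finset V) 0).map (pathAug V) = ⊤ := by
    rw [injChains_empty_zero, Submodule.map_top, LinearMap.range_eq_top]
    exact fun c => ⟨single (fun _ => a) c, pathAug_single _ c⟩
  have := Submodule.finrank_map_add_finrank_inf_ker (pathAug V) (injChains ∅ 0)
  rw [hsurj, finrank_top, Module.finrank_self, finrank_injChains, Nat.descFactorial_one,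
    ← redRpZ_complete_zero] at this
  omega

lemma finrank_rpB_complete_add_finrank_redRpZ_complete [Fintype V] (k : ℕ) :
    Module.finrank ℤ (rpB (fun x y : V => x ≠ y) k) +
        Module.finrank ℤ (redRpZ (fun x y : V => x ≠ y) (k + 1)) =
      (Fintype.card V).descFactorial (k + 2) := by
  rw [rpB_complete, redRpZ_complete_succ, Submodule.finrank_map_add_finrank_inf_ker,
    finrank_injChains]

lemma finrank_redRpZ_complete_eq_derangeNum [Fintype V] {m : ℕ} (hV : Fintype.card V = m + 1) :
    (Module.finrank ℤ (redRpZ (fun x y : V => x ≠ y) m) : ℤ) = derangeNum (m + 1) := by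
  have : Nonempty V := Fintype.card_pos_iff.mp (by omega)
  rw [derangeNum_eq_sum_descFactorial]
  -- `(m + 1).descFactorial i` is the rank of the augmented chain group in degree `i - 1`
  refine eq_sum_neg_one_pow_of_add_eq (a := fun i => ((m + 1).descFactorial i : ℤ))
    (z := fun k => (Module.finrank ℤ (redRpZ (fun x y : V => x ≠ y) k) : ℤ)) ?_ ?_ m le_rfl
  · have := finrank_redRpZ_complete_zero_add_one (V := V)
    simp only [Nat.descFactorial_zero, Nat.descFactorial_one]
    omega
  · intro k hk
    have := finrank_rpB_complete_add_finrank_redRpZ_complete (V := V) k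
    rw [rpB_complete_eq_redRpZ_complete (by omega), hV] at this
    exact_mod_cast this

end PathChain

/-- the (reduced) regular path homology of the complete graph `K_n`
(with both orientations of each edge) is concentrated in degree `n-1`, where it is free
of rank `D(n)`, the number of derangeNum of `n` elements. -/
theorem rph_complete_graph (n : ℕ) (hn : 1 ≤ n) :
    (∀ k : ℕ, k ≠ n - 1 →
      Subsingleton (redRPH (fun x y : Fin n => x ≠ y) k)) ∧
    Module.Free ℤ (redRPH (fun x y : Fin n => x ≠ y) (n - 1)) ∧
    (Module.finrank ℤ (redRPH (fun x y : Fin n => x ≠ y) (n - 1)) : ℤ) =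
      derangeNum n := by
  obtain ⟨m, rfl⟩ : ∃ m, n = m + 1 := ⟨n - 1, by omega⟩
  have hV : Fintype.card (Fin (m + 1)) = m + 1 := Fintype.card_fin _
  rw [Nat.add_sub_cancel]
  have e : redRPH (fun x y : Fin (m + 1) => x ≠ y) m ≃ₗ[ℤ] redRpZ (fun x y => x ≠ y) m :=
    Submodule.quotEquivOfEqBot _ <| by
      rw [PathChain.rpB_complete_eq_bot hV.le, Submodule.comap_bot, Submodule.ker_subtype]
  refine ⟨fun k hk => ?_, Module.Free.of_equiv e.symm, ?_⟩
  · rw [Submodule.Quotient.subsingleton_iff, Submodule.comap_subtype_eq_top]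
    rcases Nat.lt_or_gt_of_ne hk with hlt | hgt
    · exact (PathChain.rpB_complete_eq_redRpZ_complete (by omega)).ge
    · rw [PathChain.redRpZ_complete_eq_bot (by omega)]
      exact bot_le
  · rw [e.finrank_eq, PathChain.finrank_redRpZ_complete_eq_derangeNum hV]
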